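/- Let σ be a permutation of [n] and m ≤ n. Define Δ_σ to be the set of unordered pairs {i,j} of distinct elements of [m] such that {i,j} ≠ {σ(i),σ(j)}. If σ moves exactly k elements of [m] (i.e., |{i ∈ [m] : σ(i) ≠ i}| = k) with k ≥ 1 and m > 6, then mk/3 ≤ |Δ_σ| ≤ mk. -/

import Mathlib

open BigOperators

/-- `Δ_σ`: unordered pairs `{i,j}` of distinct elements of `[m]` (encoded as ordered
pairs with `i < j`) such that `{i,j} ≠ {σ i, σ j}`. -/
def deltaSet {n : ℕ} (m : ℕ) (σ : Equiv.Perm (Fin n)) : Finset (Fin n × Fin n) :=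
  Finset.univ.filter fun p =>
    p.1 < p.2 ∧ p.1.val < m ∧ p.2.val < m ∧
      ({σ p.1, σ p.2} : Finset (Fin n)) ≠ ({p.1, p.2} : Finset (Fin n))

/-- The number of elements of `[m]` moved by `σ`. -/
def movedCount {n : ℕ} (m : ℕ) (σ : Equiv.Perm (Fin n)) : ℕ :=
  (Finset.univ.filter fun i : Fin n => i.val < m ∧ σ i ≠ i).card

open Finset

/-!
Count ordered pairs: the ordered version of `Δ_σ` is closed under swapping and avoids the
diagonal, so it has exactly `2|Δ_σ|` elements. Each of its pairs has a coordinate moved by `σ`, so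
it lies in `M × [m] ∪ [m] × M`, where `M` is the set of the `k` moved points, whence `2|Δ_σ| ≤ 2km`.
Conversely every `(i, j)` with `i ∈ M`, `j ∈ [m]` and `j ∉ {i, σ i}` belongs to it, whence
`2|Δ_σ| ≥ k(m - 2)`, and `3(m - 2) ≥ 2m` as soon as `m ≥ 6`.
-/

namespace Finset

variable {α β : Type*}

theorem pair_eq_pair_iff [DecidableEq α] {a b c d : α} :
    ({a, b} : Finset α) = {c, d} ↔ a = c ∧ b = d ∨ a = d ∧ b = c := by
  rw [← coe_inj, coe_pair, coe_pair, Set.pair_eq_pair_iff]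

theorem card_mul_le_card_filter_product {s : Finset α} {t : Finset β} (r : α → β → Prop)
    [∀ a, DecidablePred (r a)] {c : ℕ} (h : ∀ a ∈ s, c ≤ #{b ∈ t | r a b}) :
    #s * c ≤ #{p ∈ s ×ˢ t | r p.1 p.2} := by
  rw [card_filter, sum_product]
  simp_rw [← card_filter]
  simpa using card_nsmul_le_sum s _ c h

theorem two_mul_card_filter_fst_lt [LinearOrder α] {s : Finset (α × α)}
    (hswap : ∀ p ∈ s, p.swap ∈ s) (hne : ∀ p ∈ s, p.1 ≠ p.2) :
    2 * #{p ∈ s | p.1 < p.2} = #s := by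
  have hsymm : #{p ∈ s | p.1 < p.2} = #{p ∈ s | ¬p.1 < p.2} :=
    card_equiv (Equiv.prodComm α α) fun p => by
      have := hswap p; have := hswap p.swap; have := hne p
      grind
  rw [two_mul]
  nth_rw 2 [hsymm]
  exact card_filter_add_card_filter_not _

end Finset

section MovedPairs

variable {α : Type*} [DecidableEq α] (f : α → α) (s : Finset α)

def movedPairs : Finset (α × α) :=
  {p ∈ s.offDiag | ({f p.1, f p.2} : Finset α) ≠ {p.1, p.2}}

variable {f s}

theorem mem_movedPairs {p : α × α} :
    p ∈ movedPairs f s ↔ p.1 ∈ s ∧ p.2 ∈ s ∧ p.1 ≠ p.2 ∧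
      ¬(f p.1 = p.1 ∧ f p.2 = p.2) ∧ ¬(f p.1 = p.2 ∧ f p.2 = p.1) := by
  simp only [movedPairs, mem_filter, mem_offDiag, ne_eq, pair_eq_pair_iff, not_or, and_assoc]

theorem swap_mem_movedPairs {p : α × α} (hp : p ∈ movedPairs f s) : p.swap ∈ movedPairs f s := by
  rw [mem_movedPairs] at hp ⊢
  grind

theorem movedPairs_subset :
    movedPairs f s ⊆ {i ∈ s | f i ≠ i} ×ˢ s ∪ s ×ˢ {i ∈ s | f i ≠ i} := by
  intro p hp
  rw [mem_movedPairs] at hp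
  simp only [mem_union, mem_product, mem_filter]
  tauto

theorem card_movedPairs_le : #(movedPairs f s) ≤ 2 * #{i ∈ s | f i ≠ i} * #s := calc
  #(movedPairs f s) ≤ #({i ∈ s | f i ≠ i} ×ˢ s ∪ s ×ˢ {i ∈ s | f i ≠ i}) :=
    card_le_card movedPairs_subset
  _ ≤ _ := (card_union_le _ _).trans_eq (by rw [card_product, card_product]; ring)

theorem filter_product_subset_movedPairs :
    {p ∈ {i ∈ s | f i ≠ i} ×ˢ s | p.2 ∉ ({p.1, f p.1} : Finset α)} ⊆ movedPairs f s := by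
  intro p hp
  simp only [mem_filter, mem_product, mem_insert, mem_singleton, not_or] at hp
  rw [mem_movedPairs]
  grind

theorem mul_card_sub_two_le_card_movedPairs :
    #{i ∈ s | f i ≠ i} * (#s - 2) ≤ #(movedPairs f s) := by
  have hfibre (i : α) : #s - 2 ≤ #{j ∈ s | j ∉ ({i, f i} : Finset α)} := by
    rw [← sdiff_eq_filter]
    exact (Nat.sub_le_sub_left card_le_two _).trans (le_card_sdiff _ _)
  calc #{i ∈ s | f i ≠ i} * (#s - 2)
      ≤ #{p ∈ {i ∈ s | f i ≠ i} ×ˢ s | p.2 ∉ ({p.1, f p.1} : Finset α)} :=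
        card_mul_le_card_filter_product (fun i j => j ∉ ({i, f i} : Finset α)) fun i _ => hfibre i
    _ ≤ #(movedPairs f s) := card_le_card filter_product_subset_movedPairs

end MovedPairs

theorem deltaSet_eq_filter_movedPairs {n : ℕ} (m : ℕ) (σ : Equiv.Perm (Fin n)) :
    deltaSet m σ = {p ∈ movedPairs σ {i : Fin n | i.val < m} | p.1 < p.2} := by
  ext p
  simp only [deltaSet, movedPairs, mem_filter, mem_univ, true_and, mem_offDiag]
  grind

theorem movedCount_eq_card_filter {n : ℕ} (m : ℕ) (σ : Equiv.Perm (Fin n)) :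
    movedCount m σ = #{i ∈ {i : Fin n | i.val < m} | σ i ≠ i} := by
  rw [movedCount, filter_filter]

theorem deltaSet_card_bounds_general {n m : ℕ} (hmn : m ≤ n) (hm : 6 < m)
    (σ : Equiv.Perm (Fin n)) (k : ℕ) (hk : movedCount m σ = k) :
    (m * k : ℝ) / 3 ≤ ((deltaSet m σ).card : ℝ) ∧
      ((deltaSet m σ).card : ℝ) ≤ (m * k : ℝ) := by
  set s : Finset (Fin n) := {i : Fin n | i.val < m}
  have hs : #s = m := by rw [Fin.card_filter_val_lt, min_eq_right hmn]
  have hdouble : 2 * #(deltaSet m σ) = #(movedPairs σ s) := by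
    rw [deltaSet_eq_filter_movedPairs]
    exact two_mul_card_filter_fst_lt (fun _ => swap_mem_movedPairs)
      fun _ hp => (mem_movedPairs.1 hp).2.2.1
  have hupper := card_movedPairs_le (f := σ) (s := s)
  have hlower := mul_card_sub_two_le_card_movedPairs (f := σ) (s := s)
  rw [← hdouble, hs, ← movedCount_eq_card_filter, hk] at hupper hlower
  have hm' : (6 : ℝ) < m := by exact_mod_cast hm
  rify [(by omega : 2 ≤ m)] at hupper hlower
  constructor <;> nlinarith

/-- if `σ` moves exactly `k ≥ 1` elements of `[m]`, `m ≤ n` and `m > 6`,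
then `mk/3 ≤ |Δ_σ| ≤ mk`. -/
theorem deltaSet_card_bounds {n m : ℕ} (hmn : m ≤ n) (hm : 6 < m)
    (σ : Equiv.Perm (Fin n)) (k : ℕ) (hk : movedCount m σ = k) (hk1 : 1 ≤ k) :
    (m * k : ℝ) / 3 ≤ ((deltaSet m σ).card : ℝ) ∧
      ((deltaSet m σ).card : ℝ) ≤ (m * k : ℝ) :=
  deltaSet_card_bounds_general hmn hm σ k hk
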